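/- Let T be a tree. Then the first ve-degree Zagreb beta index satisfies S^β(T) = 2·M₂(T), where S^β(T) = Σ_{uv ∈ E(T)} (c_u + c_v), c_v is the ve-degree of v, and M₂(T) = Σ_{uv ∈ E(T)} deg(u)·deg(v) is the second Zagreb index. -/

import Mathlib

open scoped Classical
open Finset SimpleGraph

/-- ve-degree of a vertex: number of edges incident to at least one vertex of N[v]. -/
noncomputable def veDeg {V : Type*} [Fintype V] (G : SimpleGraph V) (v : V) : ℕ :=
  (G.edgeFinset.filter (fun e => ∃ u ∈ insert v (G.neighborFinset v), u ∈ e)).card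

/-- ev-degree of an edge s(u,v): |N[u] ∪ N[v]|. -/
noncomputable def evDeg {V : Type*} [Fintype V] (G : SimpleGraph V) : Sym2 V → ℕ :=
  Sym2.lift ⟨fun u v =>
      ((insert u (G.neighborFinset u)) ∪ (insert v (G.neighborFinset v))).card,
    fun u v => congrArg Finset.card (Finset.union_comm _ _)⟩

/-- ev-degree Zagreb index S(G). -/
noncomputable def evZagreb {V : Type*} [Fintype V] (G : SimpleGraph V) : ℕ :=
  ∑ e ∈ G.edgeFinset, (evDeg G e) ^ 2

/-- first ve-degree Zagreb alpha index S^α(G). -/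
noncomputable def veAlpha {V : Type*} [Fintype V] (G : SimpleGraph V) : ℕ :=
  ∑ v, (veDeg G v) ^ 2

/-- first ve-degree Zagreb beta index S^β(G). -/
noncomputable def veBeta {V : Type*} [Fintype V] (G : SimpleGraph V) : ℕ :=
  ∑ e ∈ G.edgeFinset,
    Sym2.lift ⟨fun u v => veDeg G u + veDeg G v, fun u v => Nat.add_comm _ _⟩ e

/-- second ve-degree Zagreb index S^μ(G). -/
noncomputable def veMu {V : Type*} [Fintype V] (G : SimpleGraph V) : ℕ :=
  ∑ e ∈ G.edgeFinset,
    Sym2.lift ⟨fun u v => veDeg G u * veDeg G v, fun u v => Nat.mul_comm _ _⟩ e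

/-- second Zagreb index M₂(G). -/
noncomputable def zagreb2 {V : Type*} [Fintype V] (G : SimpleGraph V) : ℕ :=
  ∑ e ∈ G.edgeFinset,
    Sym2.lift ⟨fun u v => G.degree u * G.degree v, fun u v => Nat.mul_comm _ _⟩ e

/-- forgotten topological index F(G). -/
noncomputable def forgotten {V : Type*} [Fintype V] (G : SimpleGraph V) : ℕ :=
  ∑ e ∈ G.edgeFinset,
    Sym2.lift ⟨fun u v => G.degree u ^ 2 + G.degree v ^ 2, fun u v => Nat.add_comm _ _⟩ e

/-- the star graph K_{1,n-1} on `Fin n`, with center 0. -/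
def starGraph (n : ℕ) : SimpleGraph (Fin n) where
  Adj a b := a ≠ b ∧ (a.val = 0 ∨ b.val = 0)
  symm := ⟨fun a b h => ⟨h.1.symm, h.2.symm⟩⟩
  loopless := ⟨fun a h => h.1 rfl⟩

/-! In a forest no edge joins two neighbours of `v`, and every edge at `v` also meets a neighbour
of `v`; hence the edges meeting `N[v]` split along `u ∈ N(v)` into the edges at `u`, and
`c_v = ∑_{u ∈ N(v)} deg u`. Summing `c_u + c_v` over the edges counts each `c_v` exactly `deg v`
times, so `S^β = ∑_v deg v · c_v = ∑_{v} ∑_{u ∈ N(v)} deg v · deg u`, a sum over ordered pairs of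
adjacent vertices, which is `2 M₂`. -/

namespace SimpleGraph

section Acyclic

variable {V : Type*} {G : SimpleGraph V}

theorem IsAcyclic.not_adj_of_adj_of_adj (hG : G.IsAcyclic) {v u w : V} (hu : G.Adj v u)
    (hw : G.Adj v w) : ¬G.Adj u w := fun huw =>
  hG.cliqueFree le_rfl {v, u, w} (is3Clique_triple_iff.2 ⟨hu, hw, huw⟩)

end Acyclic

variable {V : Type*} [Fintype V] (G : SimpleGraph V) {M : Type*} [AddCommMonoid M]

theorem sum_darts_edge_eq_two_nsmul (f : Sym2 V → M) :
    ∑ d : G.Dart, f d.edge = 2 • ∑ e ∈ G.edgeFinset, f e := by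
  rw [← sum_fiberwise_of_maps_to (t := G.edgeFinset) (g := Dart.edge) (fun d _ => by simp),
    smul_sum]
  refine sum_congr rfl fun e he => ?_
  rw [sum_congr rfl fun d hd => congrArg f (mem_filter.1 hd).2, sum_const,
    G.dart_edge_fiber_card e (mem_edgeFinset.1 he)]

theorem sum_darts_eq_sum_neighborFinset (F : V → V → M) :
    ∑ d : G.Dart, F d.fst d.snd = ∑ v, ∑ u ∈ G.neighborFinset v, F v u := by
  rw [← sum_fiberwise_of_maps_to (g := fun d : G.Dart => d.fst) (fun d _ => mem_univ _)]
  refine sum_congr rfl fun v _ => ?_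
  rw [G.dart_fst_fiber v, sum_image fun _ _ _ _ h => G.dartOfNeighborSet_injective v h,
    neighborFinset_def, ← sum_set_coe]
  rfl

theorem sum_darts_fst_eq_sum_edgeFinset (f : V → M) :
    ∑ d : G.Dart, f d.fst =
      ∑ e ∈ G.edgeFinset, Sym2.lift ⟨fun u v => f u + f v, fun _ _ => add_comm _ _⟩ e := by
  rw [← sum_fiberwise_of_maps_to (t := G.edgeFinset) (g := Dart.edge) (fun d _ => by simp)]
  refine sum_congr rfl fun e he => ?_
  induction e with
  | h u v =>
    let d : G.Dart := ⟨(u, v), mem_edgeFinset.1 he⟩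
    rw [show ({d' : G.Dart | d'.edge = s(u, v)} : Finset _) = {d, d.symm} from d.edge_fiber,
      sum_pair d.symm_ne.symm]
    rfl

theorem sum_edgeFinset_lift_add (f : V → M) :
    ∑ e ∈ G.edgeFinset, Sym2.lift ⟨fun u v => f u + f v, fun _ _ => add_comm _ _⟩ e =
      ∑ v, G.degree v • f v := by
  rw [← sum_darts_fst_eq_sum_edgeFinset, sum_darts_eq_sum_neighborFinset G fun v _ => f v]
  simp only [sum_const, card_neighborFinset_eq_degree]

theorem veDeg_eq_card_biUnion_incidenceFinset (v : V) :
    veDeg G v = #((G.neighborFinset v).biUnion fun u => G.incidenceFinset u) := by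
  rw [veDeg]
  congr 1
  ext e
  induction e with
  | h a b =>
    simp only [mem_filter, mem_biUnion, mem_incidenceFinset, mem_insert, mem_neighborFinset,
      mem_edgeFinset, mem_edgeSet]
    constructor
    · rintro ⟨hab, u, rfl | hu, hue⟩
      · rcases Sym2.mem_iff.1 hue with rfl | rfl
        · exact ⟨b, hab, hab, Sym2.mem_mk_right _ _⟩
        · exact ⟨a, hab.symm, hab, Sym2.mem_mk_left _ _⟩
      · exact ⟨u, hu, hab, hue⟩
    · rintro ⟨u, hu, hab, hue⟩
      exact ⟨hab, u, Or.inr hu, hue⟩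

variable {G}

theorem IsAcyclic.veDeg_eq_sum_degree (hG : G.IsAcyclic) (v : V) :
    veDeg G v = ∑ u ∈ G.neighborFinset v, G.degree u := by
  rw [veDeg_eq_card_biUnion_incidenceFinset, card_biUnion]
  · simp only [card_incidenceFinset_eq_degree]
  intro u hu w hw huw
  refine Finset.disjoint_left.2 fun e heu hew => ?_
  rw [mem_incidenceFinset] at heu hew
  obtain rfl : e = s(u, w) := (Sym2.mem_and_mem_iff huw).1 ⟨heu.2, hew.2⟩
  exact hG.not_adj_of_adj_of_adj (G.mem_neighborFinset v u |>.1 hu)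
    (G.mem_neighborFinset v w |>.1 hw) heu.1

end SimpleGraph

theorem veBeta_eq_two_mul_zagreb2_of_tree {V : Type*} [Fintype V] (G : SimpleGraph V)
    (hT : G.IsTree) :
    veBeta G = 2 * zagreb2 G := by
  calc veBeta G = ∑ v, G.degree v * veDeg G v := G.sum_edgeFinset_lift_add (veDeg G)
    _ = ∑ v, ∑ u ∈ G.neighborFinset v, G.degree v * G.degree u := by
      simp only [hT.isAcyclic.veDeg_eq_sum_degree, mul_sum]
    _ = ∑ d : G.Dart, G.degree d.fst * G.degree d.snd :=
      (G.sum_darts_eq_sum_neighborFinset _).symm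
    _ = 2 * zagreb2 G := by
      rw [zagreb2, ← smul_eq_mul, ← sum_darts_edge_eq_two_nsmul]
      rfl
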